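/- Let S ≥ 1, let r_1 > r_2 > … > r_S > 0 be real numbers and m_1, …, m_S positive integers, and define Ξ(ξ,λ) = ∏_{j=1}^S (|ξ|² + λ^{2/r_j})^{m_j} for ξ ∈ ℝⁿ, λ ≥ 0. For s ∈ {1,…,S} set d_s = 2 Σ_{j=1}^s m_j + 2 Σ_{j=s+1}^S (r_s/r_j) m_j. Then for every fixed ξ ∈ ℝⁿ and λ ≥ 0: lim_{t→+∞} t^{−d_s} Ξ(tξ, t^{r_s}λ) = |ξ|^{2(m_1+…+m_{s−1})} (|ξ|² + λ^{2/r_s})^{m_s} λ^{2 Σ_{j=s+1}^S m_j/r_j} (with empty products and empty sums interpreted as 1 and 0 respectively). -/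

import Mathlib

/-!
Under `ξ ↦ tξ`, `λ ↦ t^{r_s} λ` the `j`-th factor of `Ξ` becomes
`t² |ξ|² + t^{2 r_s / r_j} λ^{2/r_j}`. For `j < s` the exponent `2 r_s / r_j` is below `2`, so
after dividing by `t²` only `|ξ|²` survives; for `j > s` it exceeds `2`, and after dividing by
`t^{2 r_s / r_j}` only `λ^{2/r_j}` survives; for `j = s` both terms scale like `t²`. The
normalising exponents, weighted by `m_j`, add up to `d_s`.
-/

open MeasureTheory Finset Filter

noncomputable section

/-- The weight function `Ξ(ξ,λ) = ∏_s (|ξ|² + λ^{2/r_s})^{m_s}` of a Newton polygon. -/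
def XiWeight {n S : ℕ} (r : Fin S → ℝ) (m : Fin S → ℕ)
    (ξ : EuclideanSpace ℝ (Fin n)) (lam : ℝ) : ℝ :=
  ∏ s, (‖ξ‖ ^ 2 + lam ^ (2 / r s)) ^ m s

open Real Topology

theorem Finset.prod_Iic_mul_prod_Ioi {α M : Type*} [CommMonoid M] [Fintype α] [LinearOrder α]
    [LocallyFiniteOrderBot α] [LocallyFiniteOrderTop α] (a : α) (f : α → M) :
    (∏ x ∈ Iic a, f x) * ∏ x ∈ Ioi a, f x = ∏ x, f x := by
  rw [← prod_filter_mul_prod_filter_not univ (· ≤ a)]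
  congr 2 <;> ext <;> simp

theorem tendsto_rpow_neg_sum_mul_prod {ι : Type*} {u : Finset ι} {e L : ι → ℝ}
    {g : ι → ℝ → ℝ} (h : ∀ j ∈ u, Tendsto (fun t => t ^ (-e j) * g j t) atTop (𝓝 (L j))) :
    Tendsto (fun t => t ^ (-∑ j ∈ u, e j) * ∏ j ∈ u, g j t) atTop (𝓝 (∏ j ∈ u, L j)) := by
  refine (tendsto_finsetProd u h).congr' ?_
  filter_upwards [eventually_gt_atTop 0] with t ht
  rw [← sum_neg_distrib, rpow_sum_of_pos ht, prod_mul_distrib]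

theorem Filter.Tendsto.rpow_neg_mul_pow {e L : ℝ} {g : ℝ → ℝ}
    (h : Tendsto (fun t => t ^ (-e) * g t) atTop (𝓝 L)) (m : ℕ) :
    Tendsto (fun t => t ^ (-(e * m)) * g t ^ m) atTop (𝓝 (L ^ m)) := by
  refine (h.pow m).congr' ?_
  filter_upwards [eventually_gt_atTop 0] with t ht
  rw [mul_pow, ← rpow_natCast (t ^ (-e)), ← rpow_mul ht.le, neg_mul]

theorem tendsto_rpow_neg_mul_rpow_add_rpow {p q : ℝ} (hqp : q < p) (x y : ℝ) :
    Tendsto (fun t => t ^ (-p) * (t ^ p * x + t ^ q * y)) atTop (𝓝 x) := by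
  have hlim : Tendsto (fun t : ℝ => x + t ^ (-(p - q)) * y) atTop (𝓝 (x + 0 * y)) :=
    tendsto_const_nhds.add ((tendsto_rpow_neg_atTop (sub_pos.2 hqp)).mul_const y)
  rw [zero_mul, add_zero] at hlim
  refine hlim.congr' ?_
  filter_upwards [eventually_gt_atTop 0] with t ht
  rw [mul_add, ← mul_assoc, ← mul_assoc, ← rpow_add ht, ← rpow_add ht, neg_add_cancel, rpow_zero,
    one_mul, neg_sub, sub_eq_neg_add]

section ScaledFactor

variable {E : Type*} [SeminormedAddCommGroup E] [NormedSpace ℝ E] (ξ : E) {lam ρ σ : ℝ}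

theorem norm_smul_sq_add_rpow_mul_rpow (hlam : 0 ≤ lam) {t : ℝ} (ht : 0 < t) :
    ‖t • ξ‖ ^ 2 + (t ^ ρ * lam) ^ (2 / σ) =
      t ^ (2 : ℝ) * ‖ξ‖ ^ 2 + t ^ (2 * ρ / σ) * lam ^ (2 / σ) := by
  rw [norm_smul, norm_of_nonneg ht.le, mul_pow, rpow_two, mul_rpow (rpow_nonneg ht.le _) hlam,
    ← rpow_mul ht.le, mul_div_assoc', mul_comm ρ]

theorem tendsto_rpow_neg_two_mul_scaled_factor_of_lt (hlam : 0 ≤ lam) (hσ : 0 < σ) (hρσ : ρ < σ) :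
    Tendsto (fun t => t ^ (-2 : ℝ) * (‖t • ξ‖ ^ 2 + (t ^ ρ * lam) ^ (2 / σ))) atTop
      (𝓝 (‖ξ‖ ^ 2)) := by
  have hexp : 2 * ρ / σ < 2 := by rw [div_lt_iff₀ hσ]; linarith
  refine (tendsto_rpow_neg_mul_rpow_add_rpow hexp _ (lam ^ (2 / σ))).congr' ?_
  filter_upwards [eventually_gt_atTop 0] with t ht
  rw [norm_smul_sq_add_rpow_mul_rpow ξ hlam ht]

theorem rpow_neg_two_mul_scaled_factor_self (hlam : 0 ≤ lam) (hρ : ρ ≠ 0) {t : ℝ} (ht : 0 < t) :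
    t ^ (-2 : ℝ) * (‖t • ξ‖ ^ 2 + (t ^ ρ * lam) ^ (2 / ρ)) = ‖ξ‖ ^ 2 + lam ^ (2 / ρ) := by
  rw [norm_smul_sq_add_rpow_mul_rpow ξ hlam ht, mul_div_assoc, div_self hρ, mul_one, ← mul_add,
    ← mul_assoc, ← rpow_add ht, neg_add_cancel, rpow_zero, one_mul]

theorem tendsto_rpow_neg_mul_scaled_factor_of_gt (hlam : 0 ≤ lam) (hσ : 0 < σ) (hσρ : σ < ρ) :
    Tendsto (fun t => t ^ (-(2 * ρ / σ)) * (‖t • ξ‖ ^ 2 + (t ^ ρ * lam) ^ (2 / σ))) atTop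
      (𝓝 (lam ^ (2 / σ))) := by
  have hexp : 2 < 2 * ρ / σ := by rw [lt_div_iff₀ hσ]; linarith
  refine (tendsto_rpow_neg_mul_rpow_add_rpow hexp _ (‖ξ‖ ^ 2)).congr' ?_
  filter_upwards [eventually_gt_atTop 0] with t ht
  rw [norm_smul_sq_add_rpow_mul_rpow ξ hlam ht, add_comm]

end ScaledFactor

theorem statement11_general (n S : ℕ) (r : Fin S → ℝ) (m : Fin S → ℕ)
    (hrpos : ∀ s, 0 < r s) (hr : StrictAnti r)
    (s : Fin S) (ξ : EuclideanSpace ℝ (Fin n)) (lam : ℝ) (hlam : 0 ≤ lam) :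
    Tendsto
      (fun t : ℝ =>
        t ^ (-(2 * (∑ j ∈ Finset.Iic s, (m j : ℝ))
              + 2 * ∑ j ∈ Finset.Ioi s, (r s / r j) * (m j : ℝ)))
          * XiWeight r m (t • ξ) (t ^ r s * lam))
      atTop
      (nhds (‖ξ‖ ^ (2 * ∑ j ∈ Finset.Iio s, m j)
        * (‖ξ‖ ^ 2 + lam ^ (2 / r s)) ^ m s
        * lam ^ (2 * ∑ j ∈ Finset.Ioi s, (m j : ℝ) / r j))) := by
  have hlow : Tendsto (fun t : ℝ => t ^ (-(2 * ∑ j ∈ Iio s, (m j : ℝ))) *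
      ∏ j ∈ Iio s, (‖t • ξ‖ ^ 2 + (t ^ r s * lam) ^ (2 / r j)) ^ m j) atTop
      (𝓝 (‖ξ‖ ^ (2 * ∑ j ∈ Iio s, m j))) := by
    rw [pow_mul, ← prod_pow_eq_pow_sum, mul_sum]
    exact tendsto_rpow_neg_sum_mul_prod fun j hj =>
      (tendsto_rpow_neg_two_mul_scaled_factor_of_lt ξ hlam (hrpos j)
        (hr (mem_Iio.1 hj))).rpow_neg_mul_pow _
  have hmid : Tendsto (fun t : ℝ => t ^ (-(2 * (m s : ℝ))) *
      (‖t • ξ‖ ^ 2 + (t ^ r s * lam) ^ (2 / r s)) ^ m s) atTop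
      (𝓝 ((‖ξ‖ ^ 2 + lam ^ (2 / r s)) ^ m s)) := by
    refine Tendsto.rpow_neg_mul_pow (tendsto_const_nhds.congr' ?_) _
    filter_upwards [eventually_gt_atTop 0] with t ht
    exact (rpow_neg_two_mul_scaled_factor_self ξ hlam (hrpos s).ne' ht).symm
  have hhigh : Tendsto (fun t : ℝ => t ^ (-(2 * ∑ j ∈ Ioi s, r s / r j * (m j : ℝ))) *
      ∏ j ∈ Ioi s, (‖t • ξ‖ ^ 2 + (t ^ r s * lam) ^ (2 / r j)) ^ m j) atTop
      (𝓝 (lam ^ (2 * ∑ j ∈ Ioi s, (m j : ℝ) / r j))) := by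
    have hexp : ∀ j, 2 * (m j / r j) = 2 / r j * m j := fun j => by ring
    have hpow : ∀ j, 2 * (r s / r j * m j) = 2 * r s / r j * m j := fun j => by ring
    rw [mul_sum, mul_sum, rpow_sum_of_nonneg hlam fun j _ =>
      mul_nonneg zero_le_two (div_nonneg (Nat.cast_nonneg _) (hrpos j).le)]
    simp_rw [hexp, hpow, rpow_mul hlam, rpow_natCast]
    exact tendsto_rpow_neg_sum_mul_prod fun j hj =>
      (tendsto_rpow_neg_mul_scaled_factor_of_gt ξ hlam (hrpos j)
        (hr (mem_Ioi.1 hj))).rpow_neg_mul_pow _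
  refine ((hlow.mul hmid).mul hhigh).congr' ?_
  filter_upwards [eventually_gt_atTop 0] with t ht
  rw [XiWeight, ← prod_Iic_mul_prod_Ioi s, ← prod_Iio_mul_eq_prod_Iic, ← sum_Iio_add_eq_sum_Iic,
    mul_add, neg_add, neg_add, rpow_add ht, rpow_add ht]
  ring

/-- quasi-homogeneity of the weight function: with
`d_s = 2 Σ_{j≤s} m_j + 2 Σ_{j>s} (r_s/r_j) m_j` one has
`t^{−d_s} Ξ(tξ, t^{r_s}λ) → |ξ|^{2(m₁+…+m_{s−1})} (|ξ|²+λ^{2/r_s})^{m_s} λ^{2Σ_{j>s} m_j/r_j}`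
as `t → +∞`. -/
theorem statement11 (n S : ℕ) (hS : 0 < S) (r : Fin S → ℝ) (m : Fin S → ℕ)
    (hm : ∀ s, 0 < m s) (hrpos : ∀ s, 0 < r s) (hr : StrictAnti r)
    (s : Fin S) (ξ : EuclideanSpace ℝ (Fin n)) (lam : ℝ) (hlam : 0 ≤ lam) :
    Tendsto
      (fun t : ℝ =>
        t ^ (-(2 * (∑ j ∈ Finset.Iic s, (m j : ℝ))
              + 2 * ∑ j ∈ Finset.Ioi s, (r s / r j) * (m j : ℝ)))
          * XiWeight r m (t • ξ) (t ^ r s * lam))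
      atTop
      (nhds (‖ξ‖ ^ (2 * ∑ j ∈ Finset.Iio s, m j)
        * (‖ξ‖ ^ 2 + lam ^ (2 / r s)) ^ m s
        * lam ^ (2 * ∑ j ∈ Finset.Ioi s, (m j : ℝ) / r j))) :=
  statement11_general n S r m hrpos hr s ξ lam hlam

end
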